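/- Let A, M ∈ ℝ^{n×n}, B ∈ ℝ^{n×m}, and define inductively A_1 = A, M_1 = M, A_{i+1} = A A_i + M_i, M_{i+1} = M A_i for i ≥ 1, with A_0 := I_n. Then the subspace of ℝ^n × ℝ^n spanned by the vectors {(B x, 0) : x ∈ ℝ^m} ∪ {(A_i B x, A_{i−1} B x) : i ≥ 1, x ∈ ℝ^m} equals the subspace spanned by the finite subcollection {(B x, 0) : x ∈ ℝ^m} ∪ {(A_i B x, A_{i−1} B x) : 1 ≤ i ≤ 2n+1, x ∈ ℝ^m}; in particular the two corresponding block matrices have the same rank. -/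
import Mathlib


open Matrix

/-- The sequences `A_{i+1}`, `M_{i+1}` of the paper for constant kernels: the value at
index `i : ℕ` corresponds to the subscript `i + 1`, so `amcSeq A M 0 = (A₁, M₁) = (A, M)`
and `amcSeq A M (i+1) = (A A_{i+1} + M_{i+1}, M A_{i+1})`. -/
def amcSeq {n : ℕ} (A M : Matrix (Fin n) (Fin n) ℝ) :
    ℕ → Matrix (Fin n) (Fin n) ℝ × Matrix (Fin n) (Fin n) ℝ
  | 0 => (A, M)
  | i + 1 =>
    let p := amcSeq A M i
    (A * p.1 + p.2, M * p.1)

/-- `AmatC A M i = A_i`, with the convention `A₀ = Iₙ`. -/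
def AmatC {n : ℕ} (A M : Matrix (Fin n) (Fin n) ℝ) : ℕ → Matrix (Fin n) (Fin n) ℝ
  | 0 => 1
  | i + 1 => (amcSeq A M i).1

lemma amcSeq_snd {n : ℕ} (A M : Matrix (Fin n) (Fin n) ℝ) (i : ℕ) :
    (amcSeq A M i).2 = M * AmatC A M i := by
  induction i with
  | zero => simp [amcSeq, AmatC]
  | succ i ih => simp [amcSeq, AmatC]

lemma AmatC_succ_succ {n : ℕ} (A M : Matrix (Fin n) (Fin n) ℝ) (i : ℕ) :
    AmatC A M (i + 2) = A * AmatC A M (i + 1) + M * AmatC A M i := by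
  show (amcSeq A M (i + 1)).1 = _
  rw [amcSeq]
  simp only [AmatC, amcSeq_snd]

-- general stabilization lemma
lemma stabilize {V : Type*} [AddCommGroup V] [Module ℝ V] [FiniteDimensional ℝ V]
    (f : V →ₗ[ℝ] V) (U : Submodule ℝ V) (d : ℕ) (hd : Module.finrank ℝ V ≤ d) :
    (⨆ i : ℕ, Submodule.map (f ^ i) U) = ⨆ i ∈ Set.Iic d, Submodule.map (f ^ i) U := by
  set g : ℕ → Submodule ℝ V := fun k => ⨆ i ∈ Set.Iic k, Submodule.map (f ^ i) U with hg
  have hle_g : ∀ i k : ℕ, i ≤ k → Submodule.map (f ^ i) U ≤ g k := by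
    intro i k hik
    exact le_biSup (fun i => Submodule.map (f ^ i) U) (Set.mem_Iic.mpr hik)
  have hmono : Monotone g := by
    intro a b hab
    exact biSup_mono fun i hi => le_trans hi hab
  have pow_map : ∀ j : ℕ, Submodule.map (f ^ (j + 1)) U
      = Submodule.map f (Submodule.map (f ^ j) U) := by
    intro j
    rw [pow_succ', Module.End.mul_eq_comp, Submodule.map_comp]
  have hex : ∃ k ≤ d, g (k + 1) = g k := by
    by_contra h
    push_neg at h
    have hlt : ∀ k ≤ d, g k < g (k + 1) := fun k hk =>
      lt_of_le_of_ne (hmono (Nat.le_succ k)) (fun he => h k hk he.symm)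
    have hr : ∀ k ≤ d + 1, k ≤ Module.finrank ℝ (g k) := by
      intro k hk
      induction k with
      | zero => exact Nat.zero_le _
      | succ k ih =>
        have h1 := ih (Nat.le_of_succ_le hk)
        have h2 := Submodule.finrank_lt_finrank_of_lt (hlt k (Nat.lt_succ_iff.mp hk))
        omega
    have := hr (d + 1) le_rfl
    have hle : Module.finrank ℝ (g (d + 1)) ≤ Module.finrank ℝ V :=
      Submodule.finrank_le _
    omega
  obtain ⟨k, hk, hstab⟩ := hex
  have hmap : Submodule.map f (g k) ≤ g k := by
    rw [hg]
    simp only [Submodule.map_iSup]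
    refine iSup₂_le fun i hi => ?_
    rw [← pow_map]
    have : Submodule.map (f ^ (i + 1)) U ≤ g (k + 1) :=
      hle_g _ _ (Nat.succ_le_succ hi)
    rwa [hstab] at this
  have hpow : ∀ j : ℕ, Submodule.map (f ^ j) U ≤ g k := by
    intro j
    induction j with
    | zero => exact hle_g 0 k (Nat.zero_le k)
    | succ j ih =>
      rw [pow_map]
      exact le_trans (Submodule.map_mono ih) hmap
  apply le_antisymm
  · exact iSup_le fun i => le_trans (hpow i) (hmono hk)
  · exact iSup₂_le fun i _ => le_iSup (fun i => Submodule.map (f ^ i) U) i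

/-- the span of the full (infinite) collection of block columns equals
the span of the finite subcollection with `1 ≤ i ≤ 2n + 1`; in particular the two
block matrices have the same rank. -/
theorem span_eq_span_finite
    (n m : ℕ) (A M : Matrix (Fin n) (Fin n) ℝ) (B : Matrix (Fin n) (Fin m) ℝ) :
    Submodule.span ℝ
      { v : (Fin n → ℝ) × (Fin n → ℝ) |
        (∃ x : Fin m → ℝ, v = (B *ᵥ x, 0)) ∨
        ∃ (i : ℕ) (x : Fin m → ℝ), 1 ≤ i ∧
          v = (AmatC A M i *ᵥ (B *ᵥ x), AmatC A M (i - 1) *ᵥ (B *ᵥ x)) } =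
    Submodule.span ℝ
      { v : (Fin n → ℝ) × (Fin n → ℝ) |
        (∃ x : Fin m → ℝ, v = (B *ᵥ x, 0)) ∨
        ∃ (i : ℕ) (x : Fin m → ℝ), 1 ≤ i ∧ i ≤ 2 * n + 1 ∧
          v = (AmatC A M i *ᵥ (B *ᵥ x), AmatC A M (i - 1) *ᵥ (B *ᵥ x)) } := by
  classical
  set L : (Fin n → ℝ) × (Fin n → ℝ) →ₗ[ℝ] (Fin n → ℝ) × (Fin n → ℝ) :=
    LinearMap.prod
      (A.mulVecLin ∘ₗ LinearMap.fst ℝ _ _ + M.mulVecLin ∘ₗ LinearMap.snd ℝ _ _)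
      (LinearMap.fst ℝ _ _) with hL
  set T : Set ((Fin n → ℝ) × (Fin n → ℝ)) := {v | ∃ x : Fin m → ℝ, v = (B *ᵥ x, 0)} with hT
  have hiter : ∀ (i : ℕ) (x : Fin m → ℝ),
      (L ^ (i + 1)) (B *ᵥ x, 0)
        = (AmatC A M (i + 1) *ᵥ (B *ᵥ x), AmatC A M i *ᵥ (B *ᵥ x)) := by
    intro i x
    induction i with
    | zero =>
      simp [hL, AmatC, amcSeq, Matrix.one_mulVec]
    | succ i ih =>
      rw [pow_succ', Module.End.mul_eq_comp, LinearMap.comp_apply, ih]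
      simp only [hL, LinearMap.prod_apply, Pi.prod, LinearMap.add_apply,
        LinearMap.comp_apply, LinearMap.fst_apply, LinearMap.snd_apply,
        Matrix.mulVecLin_apply]
      rw [AmatC_succ_succ, Matrix.add_mulVec]
      simp [Matrix.mulVec_mulVec, Matrix.mul_assoc]
  have hset1 :
      { v : (Fin n → ℝ) × (Fin n → ℝ) |
        (∃ x : Fin m → ℝ, v = (B *ᵥ x, 0)) ∨
        ∃ (i : ℕ) (x : Fin m → ℝ), 1 ≤ i ∧
          v = (AmatC A M i *ᵥ (B *ᵥ x), AmatC A M (i - 1) *ᵥ (B *ᵥ x)) }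
      = ⋃ i : ℕ, (L ^ i) '' T := by
    ext v
    simp only [Set.mem_setOf_eq, Set.mem_iUnion, Set.mem_image, hT]
    constructor
    · rintro (⟨x, rfl⟩ | ⟨i, x, hi, rfl⟩)
      · exact ⟨0, (B *ᵥ x, 0), ⟨x, rfl⟩, by simp⟩
      · obtain ⟨j, rfl⟩ := Nat.exists_eq_add_of_le hi
        refine ⟨1 + j, (B *ᵥ x, 0), ⟨x, rfl⟩, ?_⟩
        rw [show 1 + j = j + 1 by omega, hiter]
        simp
    · rintro ⟨i, w, ⟨x, rfl⟩, rfl⟩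
      cases i with
      | zero => exact Or.inl ⟨x, by simp⟩
      | succ j =>
        exact Or.inr ⟨j + 1, x, Nat.succ_le_succ (Nat.zero_le j), by rw [hiter]; simp⟩
  have hset2 :
      { v : (Fin n → ℝ) × (Fin n → ℝ) |
        (∃ x : Fin m → ℝ, v = (B *ᵥ x, 0)) ∨
        ∃ (i : ℕ) (x : Fin m → ℝ), 1 ≤ i ∧ i ≤ 2 * n + 1 ∧
          v = (AmatC A M i *ᵥ (B *ᵥ x), AmatC A M (i - 1) *ᵥ (B *ᵥ x)) }
      = ⋃ i ∈ Set.Iic (2 * n + 1), (L ^ i) '' T := by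
    ext v
    simp only [Set.mem_setOf_eq, Set.mem_iUnion, Set.mem_image, Set.mem_Iic, hT]
    constructor
    · rintro (⟨x, rfl⟩ | ⟨i, x, hi, hi2, rfl⟩)
      · exact ⟨0, Nat.zero_le _, (B *ᵥ x, 0), ⟨x, rfl⟩, by simp⟩
      · obtain ⟨j, rfl⟩ := Nat.exists_eq_add_of_le hi
        refine ⟨1 + j, by omega, (B *ᵥ x, 0), ⟨x, rfl⟩, ?_⟩
        rw [show 1 + j = j + 1 by omega, hiter]
        simp
    · rintro ⟨i, hi, w, ⟨x, rfl⟩, rfl⟩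
      cases i with
      | zero => exact Or.inl ⟨x, by simp⟩
      | succ j =>
        exact Or.inr ⟨j + 1, x, Nat.succ_le_succ (Nat.zero_le j), hi, by rw [hiter]; simp⟩
  rw [hset1, hset2, Submodule.span_iUnion, Submodule.span_iUnion₂]
  simp only [Submodule.span_image]
  exact stabilize L (Submodule.span ℝ T) (2 * n + 1)
    (by simp [Module.finrank_prod]; omega)
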